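/- arXiv:2509.08933 — 3 statements merged into one kernel-verified Lean document; each statement's English description precedes it below -/
import Mathlib

section
/- Let α ∈ (0,1), λ ∈ (0,1], and γ ∈ [0,1) with αλ(1−γ) < 1. Then for any t ≥ 0, the quantity (1−αλ)^{t+1} + αγλ · Σ_{k=0}^{t} (1−αλ)^{t−k} (1−αλ(1−γ))^{k} is at most (1−αλ(1−γ))^{t+1}. -/
/-- Key one-step contraction inequality. -/
theorem contraction_step (α lam γ : ℝ) (hα0 : 0 < α) (hα1 : α < 1)
    (hl0 : 0 < lam) (hl1 : lam ≤ 1) (hγ0 : 0 ≤ γ) (hγ1 : γ < 1)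
    (h : α * lam * (1 - γ) < 1) (t : ℕ) :
    (1 - α*lam)^(t+1) +
      α*γ*lam * ∑ k ∈ Finset.range (t+1), (1 - α*lam)^(t-k) * (1 - α*lam*(1-γ))^k
      ≤ (1 - α*lam*(1-γ))^(t+1) := by
  have key := geom_sum₂_mul (1 - α*lam*(1-γ)) (1 - α*lam) (t+1)
  have hsum : (∑ k ∈ Finset.range (t+1), (1 - α*lam)^(t-k) * (1 - α*lam*(1-γ))^k)
      = ∑ i ∈ Finset.range (t+1), (1 - α*lam*(1-γ))^i * (1 - α*lam)^(t+1-1-i) := by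
    refine Finset.sum_congr rfl fun i hi => ?_
    simp [mul_comm]
  rw [hsum]
  have hba : (1 - α*lam*(1-γ)) - (1 - α*lam) = α*γ*lam := by ring
  nlinarith [key]
end

section
/- Let γ ∈ [0,1), α ∈ (0,1), λ = λ_min ∈ (0,1] with αλ_min(1−γ) < 1, and Δ ≥ 0, and let {e_t}_{t≥0} be a sequence of nonnegative reals. If for all t ∈ [0,T], e_{t+1} ≤ (1−αλ)^{t+1} e_0 + αγλ Σ_{k=0}^{t}(1−αλ)^{t−k} ē_k + Δ, where ē_k ≤ (1−αλ(1−γ))^k e_0 + Δ/(1−γ) for all k ≤ t, then e_{t+1} ≤ (1−αλ(1−γ))^{t+1} e_0 + Δ/(1−γ). -/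
/-- Inductive step combining the contraction inequality with the geometric bound. -/
theorem induction_step (α lam γ Δ : ℝ) (hα0 : 0 < α) (hα1 : α < 1)
    (hl0 : 0 < lam) (hl1 : lam ≤ 1) (hγ0 : 0 ≤ γ) (hγ1 : γ < 1)
    (hal : α * lam < 1) (hΔ : 0 ≤ Δ)
    (e : ℕ → ℝ) (he : ∀ t, 0 ≤ e t) (ebar : ℕ → ℝ) (t : ℕ)
    (hbar : ∀ k ≤ t, ebar k ≤ (1 - α*lam*(1-γ))^k * e 0 + Δ/(1-γ))
    (hrec : e (t+1) ≤ (1 - α*lam)^(t+1) * e 0 +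
      α*γ*lam * ∑ k ∈ Finset.range (t+1), (1 - α*lam)^(t-k) * ebar k + Δ) :
    e (t+1) ≤ (1 - α*lam*(1-γ))^(t+1) * e 0 + Δ/(1-γ) := by
  set a := 1 - α*lam with ha
  set b := 1 - α*lam*(1-γ) with hb
  have hal0 : 0 < α * lam := mul_pos hα0 hl0
  have ha0 : 0 ≤ a := by simp [ha]; linarith
  have hagl : 0 ≤ α*γ*lam := by positivity
  have h1γ : 0 < 1 - γ := by linarith
  -- bound the sum termwise
  have hsum1 : ∑ k ∈ Finset.range (t+1), a^(t-k) * ebar k ≤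
      ∑ k ∈ Finset.range (t+1), a^(t-k) * (b^k * e 0 + Δ/(1-γ)) := by
    apply Finset.sum_le_sum
    intro k hk
    have hk' : k ≤ t := Nat.lt_succ_iff.mp (Finset.mem_range.mp hk)
    exact mul_le_mul_of_nonneg_left (hbar k hk') (pow_nonneg ha0 _)
  -- split
  have hsplit : ∑ k ∈ Finset.range (t+1), a^(t-k) * (b^k * e 0 + Δ/(1-γ)) =
      (∑ k ∈ Finset.range (t+1), b^k * a^(t-k)) * e 0 +
      (∑ k ∈ Finset.range (t+1), a^(t-k)) * (Δ/(1-γ)) := by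
    rw [Finset.sum_mul, Finset.sum_mul, ← Finset.sum_add_distrib]
    exact Finset.sum_congr rfl fun k _ => by ring
  -- telescoping identity
  have htel : α*γ*lam * ∑ k ∈ Finset.range (t+1), b^k * a^(t-k) = b^(t+1) - a^(t+1) := by
    have h := geom_sum₂_mul b a (t+1)
    have hba : b - a = α*γ*lam := by rw [ha, hb]; ring
    rw [hba] at h
    simp only [Nat.add_sub_cancel] at h
    rw [mul_comm]; exact h
  -- geometric bound
  have hgeo : (∑ k ∈ Finset.range (t+1), a^(t-k)) ≤ 1 / (α*lam) := by
    have hre : ∑ k ∈ Finset.range (t+1), a^(t-k) = ∑ k ∈ Finset.range (t+1), a^k := by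
      rw [← Finset.sum_range_reflect (fun k => a^k) (t+1)]
      simp
    rw [hre]
    have := geom_sum_mul a (t+1)
    have han : 0 ≤ a^(t+1) := pow_nonneg ha0 _
    rw [div_eq_inv_mul, ← div_eq_inv_mul, le_div_iff₀ hal0]
    nlinarith [this]
  have hsum2 : α*γ*lam * ((∑ k ∈ Finset.range (t+1), a^(t-k)) * (Δ/(1-γ))) ≤ γ * Δ / (1-γ) := by
    have hΔγ : 0 ≤ Δ/(1-γ) := by positivity
    have h1 : (∑ k ∈ Finset.range (t+1), a^(t-k)) * (Δ/(1-γ)) ≤ (1/(α*lam)) * (Δ/(1-γ)) :=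
      mul_le_mul_of_nonneg_right hgeo hΔγ
    have h2 : α*γ*lam * ((1/(α*lam)) * (Δ/(1-γ))) = γ * Δ / (1-γ) := by
      field_simp
    nlinarith [h1]
  have hfin : γ * Δ / (1-γ) + Δ = Δ / (1-γ) := by
    field_simp; ring
  have he0 : 0 ≤ e 0 := he 0
  calc e (t+1) ≤ a^(t+1) * e 0 + α*γ*lam * ∑ k ∈ Finset.range (t+1), a^(t-k) * ebar k + Δ := hrec
    _ ≤ a^(t+1) * e 0 + α*γ*lam * ((∑ k ∈ Finset.range (t+1), b^k * a^(t-k)) * e 0 +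
        (∑ k ∈ Finset.range (t+1), a^(t-k)) * (Δ/(1-γ))) + Δ := by
        have := mul_le_mul_of_nonneg_left (hsplit ▸ hsum1) hagl
        linarith
    _ = a^(t+1) * e 0 + (α*γ*lam * ∑ k ∈ Finset.range (t+1), b^k * a^(t-k)) * e 0 +
        α*γ*lam * ((∑ k ∈ Finset.range (t+1), a^(t-k)) * (Δ/(1-γ))) + Δ := by ring
    _ ≤ a^(t+1) * e 0 + (b^(t+1) - a^(t+1)) * e 0 + γ * Δ / (1-γ) + Δ := by
        rw [htel]; linarith
    _ = b^(t+1) * e 0 + (γ * Δ / (1-γ) + Δ) := by ring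
    _ = b^(t+1) * e 0 + Δ/(1-γ) := by rw [hfin]
end

section
/- (Probabilistic Azuma–Hoeffding) Let X₀, X₁, ..., X_n be a real-valued martingale with X₀ constant, and suppose there are constants b_i, c_i > 0 and r ∈ [0,1] such that: (i) for each 0 ≤ i < n, P(|X_{i+1} − X_i| > c_i) ≤ r, and (ii) |X_{i+1} − X_i| ≤ b_i almost surely, and (iii) b_i · r^{1/2} ≤ c_i for all i. Then for any δ ∈ (0,1), P( |X_n − X₀| > sqrt(32 (Σ_{i=1}^n c_i²) log(2/δ)) + Σ_{i=0}^{n−1} b_i r^{1/2} ) < δ + 2n r^{1/2}. -/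
/-!
Truncate each increment `X (i + 1) - X i` at level `c i` and recentre it by its conditional
mean given `ℱ i`. The result is a sequence of martingale differences bounded by `2 c i`, so the
Azuma–Hoeffding inequality controls its partial sums. Since `X` is a martingale, the conditional
mean of the truncated increment equals minus that of the discarded part, which is at most
`b i` times the conditional probability of `{c i < |X (i + 1) - X i|}`; as this conditional
probability has mean at most `r`, Markov's inequality makes it exceed `√r` with probability at
most `√r`. Away from these events and from the events `{c i < |X (i + 1) - X i|}`, of total
probability at most `2 n √r`, the increments equal their truncations and `X n - X 0` differs from
the auxiliary sum by at most `∑ b i √r`.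
-/

open MeasureTheory ProbabilityTheory Real Finset
open scoped NNReal

lemma exp_mul_le_cosh_add_sinh_div_mul {a z : ℝ} (ha : 0 ≤ a) (hz : |z| ≤ a) (t : ℝ) :
    exp (t * z) ≤ cosh (t * a) + sinh (t * a) / a * z := by
  rcases ha.eq_or_lt with rfl | ha
  · simp [abs_nonpos_iff.mp hz]
  obtain ⟨hza, hza'⟩ := abs_le.mp hz
  -- `t * z` is the convex combination of `∓ t * a` with weights `(a ∓ z) / 2a`
  have key := convexOn_exp.2 (Set.mem_univ (-(t * a))) (Set.mem_univ (t * a))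
    (div_nonneg (sub_nonneg.2 hza') (by positivity)) (div_nonneg (by linarith) (by positivity))
    (by field_simp; ring : (a - z) / (2 * a) + (a + z) / (2 * a) = 1)
  refine (le_of_eq ?_).trans (key.trans (le_of_eq ?_))
  · congr 1; simp only [smul_eq_mul]; field_simp; ring
  · rw [cosh_eq, sinh_eq]; simp only [smul_eq_mul]; field_simp; ring

section

variable {Ω : Type*} {m mΩ : MeasurableSpace Ω} {μ : Measure Ω}

lemma ae_condExp_exp_mul_le [IsFiniteMeasure μ] (hm : m ≤ mΩ) {Z : Ω → ℝ}
    (hZ : AEStronglyMeasurable Z μ) (hZ0 : μ[Z|m] =ᵐ[μ] 0) {a : ℝ≥0}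
    (hZa : ∀ᵐ ω ∂μ, |Z ω| ≤ a) (t : ℝ) :
    ∀ᵐ ω ∂μ, μ[fun ω ↦ exp (t * Z ω)|m] ω ≤ exp (a ^ 2 * t ^ 2 / 2) := by
  have hZi : Integrable Z μ := .of_bound hZ a (by simpa using hZa)
  set k := sinh (t * a) / a
  have hle : μ[fun ω ↦ exp (t * Z ω)|m] ≤ᵐ[μ] μ[(fun _ ↦ cosh (t * a)) + k • Z|m] :=
    condExp_mono (integrable_exp_mul_of_mem_Icc hZ.aemeasurable
        (by filter_upwards [hZa] with ω h using abs_le.mp h))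
      ((integrable_const _).add (hZi.smul k))
      (by filter_upwards [hZa] with ω h using exp_mul_le_cosh_add_sinh_div_mul a.2 h t)
  filter_upwards [hle, condExp_add (integrable_const _) (hZi.smul k) m, condExp_smul k Z m, hZ0]
    with ω hle hadd hsmul hZ0
  rw [hadd, Pi.add_apply, hsmul, Pi.smul_apply, hZ0, condExp_const hm] at hle
  calc _ ≤ cosh (t * a) := by simpa using hle
    _ ≤ exp (a ^ 2 * t ^ 2 / 2) := (cosh_le_exp_half_sq _).trans_eq (by ring_nf)

lemma ProbabilityTheory.HasSubgaussianMGF.add_of_condExp_eq_zero [IsFiniteMeasure μ]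
    (hm : m ≤ mΩ) {S Z : Ω → ℝ} {c a : ℝ≥0} (hS : HasSubgaussianMGF S c μ)
    (hSm : StronglyMeasurable[m] S) (hZ : AEStronglyMeasurable Z μ) (hZ0 : μ[Z|m] =ᵐ[μ] 0)
    (hZa : ∀ᵐ ω ∂μ, |Z ω| ≤ a) :
    HasSubgaussianMGF (S + Z) (c + a ^ 2) μ := by
  have hexpZ (t : ℝ) : Integrable (fun ω ↦ exp (t * Z ω)) μ :=
    integrable_exp_mul_of_mem_Icc hZ.aemeasurable
      (by filter_upwards [hZa] with ω h using abs_le.mp h)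
  have hprod (t : ℝ) : (fun ω ↦ exp (t * (S + Z) ω))
      = (fun ω ↦ exp (t * S ω)) * fun ω ↦ exp (t * Z ω) := by
    ext ω; simp [mul_add, exp_add]
  have hint (t : ℝ) : Integrable (fun ω ↦ exp (t * (S + Z) ω)) μ := by
    rw [hprod]
    refine (hS.integrable_exp_mul t).mul_bdd (hexpZ t).1 (c := exp (|t| * a)) ?_
    filter_upwards [hZa] with ω h
    rw [norm_of_nonneg (exp_pos _).le, exp_le_exp]
    exact (le_abs_self _).trans (by rw [abs_mul]; gcongr)
  refine ⟨hint, fun t ↦ ?_⟩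
  have hpull := condExp_mul_of_stronglyMeasurable_left (m := m) (μ := μ)
    (continuous_exp.comp_stronglyMeasurable (hSm.const_mul t)) (hprod t ▸ hint t) (hexpZ t)
  calc mgf (S + Z) μ t = ∫ ω, exp (t * S ω) * μ[fun ω ↦ exp (t * Z ω)|m] ω ∂μ := by
        rw [mgf, hprod, ← integral_condExp hm]
        exact integral_congr_ae hpull
    _ ≤ ∫ ω, exp (t * S ω) * exp (a ^ 2 * t ^ 2 / 2) ∂μ := by
        refine integral_mono_ae (integrable_condExp.congr hpull)
          ((hS.integrable_exp_mul t).mul_const _) ?_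
        filter_upwards [ae_condExp_exp_mul_le hm hZ hZ0 hZa t] with ω h
        gcongr
    _ ≤ exp (c * t ^ 2 / 2) * exp (a ^ 2 * t ^ 2 / 2) := by
        rw [integral_mul_const]; gcongr; exact hS.mgf_le t
    _ = exp (↑(c + a ^ 2) * t ^ 2 / 2) := by
        rw [← exp_add]; push_cast; ring_nf

-- Mathlib's `measure_sum_ge_le_of_hasCondSubgaussianMGF` needs `StandardBorelSpace Ω`.
lemma hasSubgaussianMGF_sum_of_condExp_eq_zero [IsProbabilityMeasure μ] {ℱ : Filtration ℕ mΩ}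
    {Z : ℕ → Ω → ℝ} {a : ℕ → ℝ≥0} (hZm : ∀ i, StronglyMeasurable[ℱ (i + 1)] (Z i))
    (hZ0 : ∀ i, μ[Z i|ℱ i] =ᵐ[μ] 0) (hZa : ∀ i, ∀ᵐ ω ∂μ, |Z i ω| ≤ a i) (n : ℕ) :
    HasSubgaussianMGF (fun ω ↦ ∑ i ∈ range n, Z i ω) (∑ i ∈ range n, a i ^ 2) μ := by
  induction n with
  | zero => simp [HasSubgaussianMGF.fun_zero]
  | succ n ih =>
    simp_rw [sum_range_succ]
    exact ih.add_of_condExp_eq_zero (ℱ.le n)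
      (Finset.stronglyMeasurable_fun_sum _ fun i hi ↦ (hZm i).mono (ℱ.mono (mem_range.mp hi)))
      ((hZm n).mono (ℱ.le _)).aestronglyMeasurable (hZ0 n) (hZa n)

lemma ProbabilityTheory.HasSubgaussianMGF.measureReal_le_abs_le [IsFiniteMeasure μ]
    {X : Ω → ℝ} {c : ℝ≥0} (h : HasSubgaussianMGF X c μ) {ε : ℝ} (hε : 0 ≤ ε) :
    μ.real {ω | ε ≤ |X ω|} ≤ 2 * exp (-ε ^ 2 / (2 * c)) := by
  have hunion : {ω | ε ≤ |X ω|} = {ω | ε ≤ X ω} ∪ {ω | ε ≤ (-X) ω} := by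
    ext ω; simp [le_abs]
  rw [hunion, two_mul]
  exact (measureReal_union_le _ _).trans
    (add_le_add (h.measure_ge_le hε) (h.neg.measure_ge_le hε))

lemma condExp_sub_condExp_ae_eq_zero (hm : m ≤ mΩ) [SigmaFinite (μ.trim hm)] {f : Ω → ℝ}
    (hf : Integrable f μ) : μ[f - μ[f|m]|m] =ᵐ[μ] 0 := by
  filter_upwards [condExp_sub hf integrable_condExp m] with ω h
  rw [h, Pi.sub_apply, condExp_of_stronglyMeasurable hm stronglyMeasurable_condExp
    integrable_condExp, sub_self, Pi.zero_apply]

lemma MeasureTheory.Martingale.condExp_sub_ae_eq_zero {ι : Type*} [Preorder ι]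
    {ℱ : Filtration ι mΩ} [SigmaFiniteFiltration μ ℱ] {X : ι → Ω → ℝ} (hX : Martingale X ℱ μ)
    {i j : ι} (hij : i ≤ j) : μ[X j - X i|ℱ i] =ᵐ[μ] 0 := by
  filter_upwards [condExp_sub (hX.integrable j) (hX.integrable i) (ℱ i),
    hX.condExp_ae_eq hij] with ω h hj
  rw [h, Pi.sub_apply, hj, condExp_of_stronglyMeasurable (ℱ.le i) (hX.stronglyAdapted i)
    (hX.integrable i), sub_self, Pi.zero_apply]

lemma ae_abs_condExp_le_condExp {f g : Ω → ℝ} (hf : Integrable f μ) (hg : Integrable g μ)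
    (hfg : ∀ᵐ ω ∂μ, |f ω| ≤ g ω) : ∀ᵐ ω ∂μ, |μ[f|m] ω| ≤ μ[g|m] ω := by
  filter_upwards [abs_condExp_ae_le_condExp_abs (m := m) f, condExp_mono (m := m) hf.abs hg hfg]
    with ω h h' using h.trans h'

lemma measure_lt_le_of_integral_le_mul [IsFiniteMeasure μ] {h : Ω → ℝ} (h0 : 0 ≤ᵐ[μ] h)
    (hi : Integrable h μ) {s u : ℝ} (hs : 0 ≤ s) (hsu : ∫ ω, h ω ∂μ ≤ s * u) :
    μ {ω | s < h ω} ≤ ENNReal.ofReal u := by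
  rcases hs.eq_or_lt with rfl | hs
  · have : h =ᵐ[μ] 0 := (integral_eq_zero_iff_of_nonneg_ae h0 hi).mp
      (le_antisymm (by simpa using hsu) (integral_nonneg_of_ae h0))
    exact (measure_mono_null (fun ω (hω : 0 < h ω) ↦ hω.ne') (ae_iff.mp this)).trans_le zero_le
  calc μ {ω | s < h ω} ≤ μ {ω | s ≤ h ω} := measure_mono fun ω (hω : s < h ω) ↦ hω.le
    _ = ENNReal.ofReal (μ.real {ω | s ≤ h ω}) := (ofReal_measureReal (measure_ne_top μ _)).symm
    _ ≤ ENNReal.ofReal u := ENNReal.ofReal_le_ofReal <|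
      le_of_mul_le_mul_left ((mul_meas_ge_le_integral_of_nonneg h0 hi s).trans hsu) hs

-- `μ[1{|D| ≤ c} D | m] = μ[1{|D| ≤ c} D - D | m]`, and the difference vanishes off `{c < |D|}`.
lemma ae_abs_condExp_indicator_le [IsFiniteMeasure μ] {D : Ω → ℝ} (hD : StronglyMeasurable D)
    (hD0 : μ[D|m] =ᵐ[μ] 0) {b : ℝ} (hDb : ∀ᵐ ω ∂μ, |D ω| ≤ b) (c : ℝ) :
    ∀ᵐ ω ∂μ, |μ[{ω | |D ω| ≤ c}.indicator D|m] ω|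
      ≤ μ[{ω | c < |D ω|}.indicator fun _ ↦ b|m] ω := by
  have hDi : Integrable D μ := .of_bound hD.aestronglyMeasurable b (by simpa using hDb)
  have hTi : Integrable ({ω | |D ω| ≤ c}.indicator D) μ :=
    hDi.indicator (measurableSet_le hD.measurable.abs measurable_const)
  have hAi : Integrable ({ω | c < |D ω|}.indicator fun _ ↦ b) μ :=
    (integrable_const b).indicator (measurableSet_lt measurable_const hD.measurable.abs)
  have hbound : ∀ᵐ ω ∂μ,
      |({ω | |D ω| ≤ c}.indicator D - D) ω| ≤ {ω | c < |D ω|}.indicator (fun _ ↦ b) ω := by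
    filter_upwards [hDb] with ω h
    by_cases hc : |D ω| ≤ c
    · simp [hc]
    · simp [hc, not_le.mp hc, h]
  filter_upwards [ae_abs_condExp_le_condExp (m := m) (hTi.sub hDi) hAi hbound,
    condExp_sub hTi hDi m, hD0] with ω h hsub h0
  rwa [hsub, Pi.sub_apply, h0, Pi.zero_apply, sub_zero] at h

lemma measure_lt_abs_condExp_indicator_le [IsFiniteMeasure μ] (hm : m ≤ mΩ) {D : Ω → ℝ}
    (hD : StronglyMeasurable D) (hD0 : μ[D|m] =ᵐ[μ] 0) {b : ℝ} (hb : 0 ≤ b)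
    (hDb : ∀ᵐ ω ∂μ, |D ω| ≤ b) {c r : ℝ} (hr : 0 ≤ r)
    (hDc : μ {ω | c < |D ω|} ≤ ENNReal.ofReal r) :
    μ {ω | b * √r < |μ[{ω | |D ω| ≤ c}.indicator D|m] ω|} ≤ ENNReal.ofReal √r := by
  set A := {ω | c < |D ω|}
  have hA : MeasurableSet A := measurableSet_lt measurable_const hD.measurable.abs
  calc _ ≤ μ {ω | b * √r < μ[A.indicator fun _ ↦ b|m] ω} := by
        refine measure_mono_ae ?_
        filter_upwards [ae_abs_condExp_indicator_le hD hD0 hDb c] with ω h hω using hω.trans_le h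
    _ ≤ _ := by
        refine measure_lt_le_of_integral_le_mul
          (condExp_nonneg (ae_of_all _ (Set.indicator_nonneg fun _ _ ↦ hb))) integrable_condExp
          (by positivity) ?_
        rw [integral_condExp hm, integral_indicator_const b hA, smul_eq_mul, mul_assoc,
          mul_self_sqrt hr, mul_comm]
        exact mul_le_mul_of_nonneg_left (ENNReal.toReal_le_of_le_ofReal hr hDc) hb

noncomputable def truncatedIncrement (X : ℕ → Ω → ℝ) (c : ℕ → ℝ) (i : ℕ) : Ω → ℝ :=
  {ω | |(X (i + 1) - X i) ω| ≤ c i}.indicator (X (i + 1) - X i)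

noncomputable def truncationExceptionalSet (μ : Measure Ω) (ℱ : Filtration ℕ mΩ)
    (X : ℕ → Ω → ℝ) (b c : ℕ → ℝ) (r : ℝ) (n : ℕ) : Set Ω :=
  ⋃ i ∈ range n, ({ω | c i < |X (i + 1) ω - X i ω|} ∪
    {ω | b i * √r < |μ[truncatedIncrement X c i|ℱ i] ω|})

variable {ℱ : Filtration ℕ mΩ} {X : ℕ → Ω → ℝ} {b c : ℕ → ℝ} {r : ℝ} {n : ℕ}

lemma stronglyMeasurable_truncatedIncrement (hX : StronglyAdapted ℱ X) (i : ℕ) :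
    StronglyMeasurable[ℱ (i + 1)] (truncatedIncrement X c i) := by
  have hD := (hX (i + 1)).sub ((hX i).mono (ℱ.mono i.le_succ))
  exact hD.indicator ((measurable_abs.comp hD.measurable) measurableSet_Iic)

lemma abs_truncatedIncrement_le {i : ℕ} (hc : 0 ≤ c i) (ω : Ω) :
    |truncatedIncrement X c i ω| ≤ c i := by
  rw [truncatedIncrement, Set.indicator_apply]
  split_ifs with h
  · exact h
  · rwa [abs_zero]

lemma measureReal_le_abs_sum_truncatedIncrement_le [IsProbabilityMeasure μ]
    (hX : StronglyAdapted ℱ X) (hc : ∀ i, 0 ≤ c i) (n : ℕ) {t : ℝ} (ht : 0 ≤ t) :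
    μ.real {ω | t ≤ |∑ i ∈ range n,
        (truncatedIncrement X c i - μ[truncatedIncrement X c i|ℱ i]) ω|}
      ≤ 2 * exp (-t ^ 2 / (2 * ∑ i ∈ range n, (2 * c i) ^ 2)) := by
  have hT i := stronglyMeasurable_truncatedIncrement (c := c) hX i
  have hTi (i : ℕ) : Integrable (truncatedIncrement X c i) μ :=
    .of_bound ((hT i).mono (ℱ.le _)).aestronglyMeasurable (c i)
      (ae_of_all _ fun ω ↦ abs_truncatedIncrement_le (hc i) ω)
  have hZa (i : ℕ) : ∀ᵐ ω ∂μ, |(truncatedIncrement X c i - μ[truncatedIncrement X c i|ℱ i]) ω|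
      ≤ (2 * c i).toNNReal := by
    filter_upwards [ae_bdd_abs_condExp_of_ae_bdd_abs (m := ℱ i)
      (ae_of_all μ fun ω ↦ abs_truncatedIncrement_le (hc i) ω)] with ω h
    rw [Real.coe_toNNReal _ (by linarith [hc i])]
    exact (abs_sub _ _).trans (by linarith [abs_truncatedIncrement_le (X := X) (hc i) ω])
  have := (hasSubgaussianMGF_sum_of_condExp_eq_zero
    (fun i ↦ (hT i).sub (stronglyMeasurable_condExp.mono (ℱ.mono i.le_succ)))
    (fun i ↦ condExp_sub_condExp_ae_eq_zero (ℱ.le i) (hTi i)) hZa n).measureReal_le_abs_le ht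
  convert this using 6
  push_cast
  exact sum_congr rfl fun i _ ↦ by rw [Real.coe_toNNReal _ (by linarith [hc i])]

lemma measure_truncationExceptionalSet_le [IsProbabilityMeasure μ] (hX : Martingale X ℱ μ)
    (hb : ∀ i, 0 ≤ b i) (hr0 : 0 ≤ r) (hr1 : r ≤ 1)
    (h1 : ∀ i < n, μ {ω | c i < |X (i + 1) ω - X i ω|} ≤ ENNReal.ofReal r)
    (h2 : ∀ i < n, ∀ᵐ ω ∂μ, |X (i + 1) ω - X i ω| ≤ b i) :
    μ (truncationExceptionalSet μ ℱ X b c r n) ≤ ENNReal.ofReal (2 * n * √r) := by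
  have hstep : ∀ i ∈ range n, μ ({ω | c i < |X (i + 1) ω - X i ω|} ∪
      {ω | b i * √r < |μ[truncatedIncrement X c i|ℱ i] ω|}) ≤ 2 * ENNReal.ofReal √r := by
    intro i hi
    have hi := mem_range.mp hi
    have hD : StronglyMeasurable (X (i + 1) - X i) :=
      ((hX.stronglyMeasurable (i + 1)).mono (ℱ.le _)).sub
        ((hX.stronglyMeasurable i).mono (ℱ.le _))
    refine (measure_union_le _ _).trans ?_
    rw [two_mul]
    gcongr
    · exact (h1 i hi).trans (ENNReal.ofReal_le_ofReal (le_sqrt_self_iff.mpr hr1))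
    · exact measure_lt_abs_condExp_indicator_le (ℱ.le i) hD
        (hX.condExp_sub_ae_eq_zero i.le_succ) (hb i) (h2 i hi) hr0 (h1 i hi)
  calc _ ≤ ∑ i ∈ range n, 2 * ENNReal.ofReal √r := (measure_biUnion_finset_le _ _).trans
        (sum_le_sum hstep)
    _ = ENNReal.ofReal (2 * n * √r) := by
        rw [sum_const, card_range, nsmul_eq_mul, ENNReal.ofReal_mul (by positivity),
          ENNReal.ofReal_mul (by positivity)]
        simp only [ENNReal.ofReal_natCast, ENNReal.ofReal_ofNat]
        ring

lemma abs_sub_le_of_notMem_truncationExceptionalSet {ω : Ω}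
    (hω : ω ∉ truncationExceptionalSet μ ℱ X b c r n) :
    |X n ω - X 0 ω| ≤ |∑ i ∈ range n,
        (truncatedIncrement X c i - μ[truncatedIncrement X c i|ℱ i]) ω|
      + ∑ i ∈ range n, b i * √r := by
  simp only [truncationExceptionalSet, Set.mem_iUnion, Set.mem_union, Set.mem_ofPred_eq,
    not_exists, not_or, not_lt] at hω
  have hsum : X n ω - X 0 ω = ∑ i ∈ range n,
      (truncatedIncrement X c i - μ[truncatedIncrement X c i|ℱ i]) ω
        + ∑ i ∈ range n, μ[truncatedIncrement X c i|ℱ i] ω := by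
    rw [← sum_add_distrib, ← sum_range_sub (fun i ↦ X i ω)]
    refine sum_congr rfl fun i hi ↦ ?_
    simp [truncatedIncrement, (hω i hi).1]
  rw [hsum]
  refine (abs_add_le _ _).trans (add_le_add_right ?_ _)
  exact (abs_sum_le_sum_abs _ _).trans (sum_le_sum fun i hi ↦ (hω i hi).2)

end

lemma two_mul_exp_neg_sqrt_sq_div_lt {A δ : ℝ} (hA : 0 < A) (hδ0 : 0 < δ) (hδ1 : δ < 1) :
    2 * exp (-√(32 * A * log (2 / δ)) ^ 2 / (2 * (4 * A))) < δ := by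
  have hL : 0 < log (2 / δ) := log_pos (by rw [lt_div_iff₀ hδ0]; linarith)
  have hexp : exp (-√(32 * A * log (2 / δ)) ^ 2 / (2 * (4 * A))) = (δ / 2) ^ 4 := by
    rw [sq_sqrt (by positivity), show -(32 * A * log (2 / δ)) / (2 * (4 * A)) = -(4 * log (2 / δ))
      by field_simp; ring, exp_neg, ← log_rpow (by positivity), exp_log (by positivity)]
    norm_num [div_pow]
  rw [hexp]
  nlinarith [pow_le_one₀ hδ0.le hδ1.le (n := 3)]

theorem probabilistic_azuma_hoeffding_general
    {Ω : Type*} {mΩ : MeasurableSpace Ω} (μ : Measure Ω) [IsProbabilityMeasure μ]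
    (ℱ : Filtration ℕ mΩ) (X : ℕ → Ω → ℝ) (hX : Martingale X ℱ μ)
    (n : ℕ) (b c : ℕ → ℝ) (hb : ∀ i, 0 < b i) (hc : ∀ i, 0 < c i)
    (r : ℝ) (hr0 : 0 ≤ r) (hr1 : r ≤ 1)
    (h1 : ∀ i < n, μ {ω | c i < |X (i+1) ω - X i ω|} ≤ ENNReal.ofReal r)
    (h2 : ∀ i < n, ∀ᵐ ω ∂μ, |X (i+1) ω - X i ω| ≤ b i)
    (δ : ℝ) (hδ0 : 0 < δ) (hδ1 : δ < 1) :
    μ {ω | Real.sqrt (32 * (∑ i ∈ Finset.range n, (c i)^2) * Real.log (2/δ))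
        + (∑ i ∈ Finset.range n, b i * Real.sqrt r) < |X n ω - X 0 ω|}
      < ENNReal.ofReal (δ + 2 * n * Real.sqrt r) := by
  rcases n.eq_zero_or_pos with rfl | hn
  · simpa using hδ0
  set t := √(32 * (∑ i ∈ range n, c i ^ 2) * log (2 / δ))
  set Z := fun ω ↦ ∑ i ∈ range n,
    (truncatedIncrement X c i - μ[truncatedIncrement X c i|ℱ i]) ω
  have hZ : μ {ω | t ≤ |Z ω|} < ENNReal.ofReal δ := by
    have hA : 0 < ∑ i ∈ range n, c i ^ 2 :=
      sum_pos (fun i _ ↦ pow_pos (hc i) 2) (nonempty_range_iff.mpr hn.ne')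
    rw [← ofReal_measureReal (measure_ne_top _ _), ENNReal.ofReal_lt_ofReal_iff hδ0]
    refine (measureReal_le_abs_sum_truncatedIncrement_le hX.stronglyAdapted
      (fun i ↦ (hc i).le) n (sqrt_nonneg _)).trans_lt ?_
    simpa [mul_pow, ← mul_sum, show (2 : ℝ) ^ 2 = 4 by norm_num]
      using two_mul_exp_neg_sqrt_sq_div_lt hA hδ0 hδ1
  calc _ ≤ μ ({ω | t ≤ |Z ω|} ∪ truncationExceptionalSet μ ℱ X b c r n) := by
        refine measure_mono fun ω hω ↦ ?_
        by_contra h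
        simp only [Set.mem_union, Set.mem_ofPred_eq, not_or, not_le] at h hω
        linarith [abs_sub_le_of_notMem_truncationExceptionalSet h.2]
    _ ≤ μ {ω | t ≤ |Z ω|} + μ (truncationExceptionalSet μ ℱ X b c r n) := measure_union_le _ _
    _ < ENNReal.ofReal δ + ENNReal.ofReal (2 * n * √r) := ENNReal.add_lt_add_of_lt_of_le
        (measure_ne_top _ _) hZ
        (measure_truncationExceptionalSet_le hX (fun i ↦ (hb i).le) hr0 hr1 h1 h2)
    _ = _ := (ENNReal.ofReal_add hδ0.le (by positivity)).symm

/-- Probabilistic Azuma–Hoeffding inequality for martingales whose increments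
admit a coarse deterministic bound and a finer high-probability bound. -/
theorem probabilistic_azuma_hoeffding
    {Ω : Type*} {mΩ : MeasurableSpace Ω} (μ : Measure Ω) [IsProbabilityMeasure μ]
    (ℱ : Filtration ℕ mΩ) (X : ℕ → Ω → ℝ) (hX : Martingale X ℱ μ)
    (x₀ : ℝ) (hX0 : X 0 = fun _ => x₀)
    (n : ℕ) (b c : ℕ → ℝ) (hb : ∀ i, 0 < b i) (hc : ∀ i, 0 < c i)
    (r : ℝ) (hr0 : 0 ≤ r) (hr1 : r ≤ 1)
    (h1 : ∀ i < n, μ {ω | c i < |X (i+1) ω - X i ω|} ≤ ENNReal.ofReal r)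
    (h2 : ∀ i < n, ∀ᵐ ω ∂μ, |X (i+1) ω - X i ω| ≤ b i)
    (h3 : ∀ i < n, b i * Real.sqrt r ≤ c i)
    (δ : ℝ) (hδ0 : 0 < δ) (hδ1 : δ < 1) :
    μ {ω | Real.sqrt (32 * (∑ i ∈ Finset.range n, (c i)^2) * Real.log (2/δ))
        + (∑ i ∈ Finset.range n, b i * Real.sqrt r) < |X n ω - X 0 ω|}
      < ENNReal.ofReal (δ + 2 * n * Real.sqrt r) :=
  probabilistic_azuma_hoeffding_general μ ℱ X hX n b c hb hc r hr0 hr1 h1 h2 δ hδ0 hδ1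
end
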